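/- Let n ≥ 1, let S₀ and S₁ be invertible symmetric real n×n matrices, let B be a real n×n matrix with zᵀBz ≤ 0 for all z ∈ ℝⁿ, let Δt > 0, and let u₀, u₁ ∈ ℝⁿ satisfy (S₁u₁ − S₀u₀)/Δt = B S₁ u₁. Then u₁ᵀ S₁² u₁ ≤ u₀ᵀ S₀² u₀; equivalently, writing M_i = S_i², the scheme is unconditionally stable in the discrete energy norm: u₁ᵀ M₁ u₁ ≤ u₀ᵀ M₀ u₀. -/

import Mathlib

/-!
Put `vᵢ = Sᵢ uᵢ`. Since `Sᵢ` is symmetric, the energy `uᵢᵀ Sᵢ² uᵢ` is `|vᵢ|²`, and the scheme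
reads `v₁ - v₀ = Δt B v₁`. Pairing with `v₁` and using `B ≤ 0` gives `⟨v₁, v₁ - v₀⟩ ≤ 0`, and then
`|v₁|² - |v₀|² = 2 ⟨v₁, v₁ - v₀⟩ - |v₁ - v₀|² ≤ 0`.
-/

open Matrix

variable {ι R : Type*} [Fintype ι]

theorem Matrix.IsSymm.dotProduct_mul_self_mulVec [CommSemiring R] {S : Matrix ι ι R}
    (hS : S.IsSymm) (u : ι → R) : u ⬝ᵥ (S * S) *ᵥ u = S *ᵥ u ⬝ᵥ S *ᵥ u := by
  rw [← mulVec_mulVec, dotProduct_mulVec, ← mulVec_transpose, hS]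

theorem dotProduct_self_le_of_dotProduct_sub_nonpos [CommRing R] [LinearOrder R]
    [IsStrictOrderedRing R] {v₀ v₁ : ι → R} (h : v₁ ⬝ᵥ (v₁ - v₀) ≤ 0) :
    v₁ ⬝ᵥ v₁ ≤ v₀ ⬝ᵥ v₀ := by
  have hsq : 0 ≤ (v₁ - v₀) ⬝ᵥ (v₁ - v₀) := Finset.sum_nonneg fun i _ => mul_self_nonneg _
  simp only [dotProduct_sub, sub_dotProduct, dotProduct_comm v₀ v₁] at h hsq
  linarith

theorem dotProduct_sub_nonpos_of_backwardEuler_step [Field R] [LinearOrder R]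
    [IsStrictOrderedRing R] {B : Matrix ι ι R} (hB : ∀ z, z ⬝ᵥ B *ᵥ z ≤ 0) {Δt : R}
    (hΔt : 0 < Δt) {v₀ v₁ : ι → R} (hstep : (1 / Δt) • (v₁ - v₀) = B *ᵥ v₁) :
    v₁ ⬝ᵥ (v₁ - v₀) ≤ 0 := by
  have h : 1 / Δt * (v₁ ⬝ᵥ (v₁ - v₀)) ≤ 0 := by
    rw [← smul_eq_mul, ← dotProduct_smul, hstep]
    exact hB v₁
  exact nonpos_of_mul_nonpos_right h (one_div_pos.mpr hΔt)

theorem backwardEuler_stable_energy_norm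
    (n : ℕ)
    (S₀ S₁ B : Matrix (Fin n) (Fin n) ℝ)
    (hS₀_symm : S₀.IsSymm)
    (hS₁_symm : S₁.IsSymm)
    (hB : ∀ z : Fin n → ℝ, z ⬝ᵥ B.mulVec z ≤ 0)
    (Δt : ℝ) (hΔt : 0 < Δt)
    (u₀ u₁ : Fin n → ℝ)
    (hstep : (1 / Δt) • (S₁.mulVec u₁ - S₀.mulVec u₀) = B.mulVec (S₁.mulVec u₁)) :
    u₁ ⬝ᵥ (S₁ * S₁).mulVec u₁ ≤ u₀ ⬝ᵥ (S₀ * S₀).mulVec u₀ := by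
  rw [hS₀_symm.dotProduct_mul_self_mulVec, hS₁_symm.dotProduct_mul_self_mulVec]
  exact dotProduct_self_le_of_dotProduct_sub_nonpos
    (dotProduct_sub_nonpos_of_backwardEuler_step hB hΔt hstep)
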